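/- arXiv:1304.0280 — 2 statements merged into one kernel-verified Lean document; each statement's English description precedes it below -/
import Mathlib

section
/- Let $V$ be a finite-dimensional $\mathbb{Q}$-vector space with a nondegenerate alternating bilinear form, and let $\delta_1, \dots, \delta_{2g}$ be a basis. Suppose real-valued quantities $x_1, \dots, x_{2g}$ and operators $N_1, \dots, N_{2g}$ (each $N_i$ a derivation-like 'monodromy increment' acting linearly on the $x_j$, with $N_i(x_j) = 0$ for $i \neq j$ and $N_i(c) = 0$ for constants $c$) satisfy $c_i = N_i(x_i) + (-1)^m \sum_{j=1}^{2g} x_j (\delta_j, \delta_i)$ with $c_i \in \mathbb{Z}$ for all $i$. Assume further that for each $k$ with $2 \le k \le 2g$ there exists $\ell < k$ with $(\delta_\ell, \delta_k) \neq 0$. If there is a nontrivial rational relation $\sum_{j=1}^{2g} \lambda_j x_j = \lambda_0$ ($\lambda_j \in \mathbb{Q}$, not all $\lambda_1,\dots,\lambda_{2g}$ zero), then $N_i(x_i) = 0$ for all $i = 1, \dots, 2g$. -/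
/-!
Let `r ℓ k` mean `(δ ℓ, δ k) ≠ 0`. A relation `∑ μⱼ xⱼ = const` with `μᵢ ≠ 0`, hit with `Nᵢ`,
gives `μᵢ Nᵢ(xᵢ) = 0`. So the rational relation yields one index `i₀` with `N_{i₀}(x_{i₀}) = 0`,
and whenever `Nᵢ(xᵢ) = 0` the defining equation of `cᵢ` becomes such a relation with
coefficients `(δⱼ, δᵢ)`, forcing `N_k(x_k) = 0` for every `k` with `r k i`. Since the form is
alternating, `r` is symmetric, and the chain condition links every index to `0`, so the
vanishing spreads from `i₀` to all indices.
-/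

open Relation

theorem Fin.eqvGen_of_forall_exists_lt {n : ℕ} {r : Fin n → Fin n → Prop}
    (h : ∀ k : Fin n, 1 ≤ (k : ℕ) → ∃ ℓ : Fin n, (ℓ : ℕ) < k ∧ r ℓ k) (i j : Fin n) :
    EqvGen r i j := by
  have linked_to_zero : ∀ k : Fin n, EqvGen r ⟨0, k.pos⟩ k := by
    intro k
    induction k using WellFoundedLT.induction with
    | _ k ih =>
      rcases Nat.eq_zero_or_pos k with hk | hk
      · rw [show (⟨0, k.pos⟩ : Fin n) = k from Fin.ext hk.symm]
        exact EqvGen.refl k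
      · obtain ⟨ℓ, hℓ, hrℓ⟩ := h k hk
        exact (ih ℓ hℓ).trans _ _ _ (EqvGen.rel _ _ hrℓ)
  exact ((linked_to_zero i).symm _ _).trans _ _ _ (linked_to_zero j)

theorem Relation.EqvGen.iff_of_forall_rel {α : Type*} {r : α → α → Prop} {p : α → Prop}
    (hp : ∀ a b, r a b → (p a ↔ p b)) {a b : α} (hab : EqvGen r a b) : p a ↔ p b := by
  induction hab with
  | rel a b h => exact hp a b h
  | refl a => exact Iff.rfl
  | symm a b _ ih => exact ih.symm
  | trans a b c _ _ hab hbc => exact hab.trans hbc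

section Monodromy

variable {ι K F : Type*} [Fintype ι] [Field K] [Semiring F] [Algebra K F]
  {x : ι → F} {N : ι → F →ₗ[K] F}

theorem apply_self_eq_zero_of_sum_eq_algebraMap
    (hconst : ∀ (i : ι) (r : K), N i (algebraMap K F r) = 0)
    (hoff : ∀ i j : ι, i ≠ j → N i (x j) = 0)
    {μ : ι → K} {r : K} (hsum : ∑ j, algebraMap K F (μ j) * x j = algebraMap K F r)
    {i : ι} (hμ : μ i ≠ 0) : N i (x i) = 0 := by
  have hN : N i (∑ j, μ j • x j) = μ i • N i (x i) := by
    rw [map_sum, Finset.sum_eq_single i (fun j _ hj => by rw [map_smul, hoff i j hj.symm,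
      smul_zero]) (fun h => absurd (Finset.mem_univ i) h), map_smul]
  have hsum' : ∑ j, μ j • x j = algebraMap K F r := by
    simpa only [Algebra.smul_def] using hsum
  rw [hsum', hconst] at hN
  exact (smul_eq_zero.mp hN.symm).resolve_left hμ

theorem apply_self_eq_zero_of_apply_self_eq_zero
    (hconst : ∀ (i : ι) (r : K), N i (algebraMap K F r) = 0)
    (hoff : ∀ i j : ι, i ≠ j → N i (x j) = 0)
    {A : ι → ι → K} {ε c : K} (hε : ε ≠ 0) {i k : ι}
    (heq : algebraMap K F c = N i (x i) + algebraMap K F ε * ∑ j, algebraMap K F (A j i) * x j)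
    (hi : N i (x i) = 0) (hA : A k i ≠ 0) : N k (x k) = 0 := by
  refine apply_self_eq_zero_of_sum_eq_algebraMap hconst hoff (μ := fun j => A j i)
    (r := ε⁻¹ * c) ?_ hA
  rw [hi, zero_add] at heq
  rw [map_mul, heq, ← mul_assoc, ← map_mul, inv_mul_cancel₀ hε, map_one, one_mul]

end Monodromy

theorem stmt11_general (g : ℕ) {V : Type*} [AddCommGroup V] [Module ℚ V]
    (B : V →ₗ[ℚ] V →ₗ[ℚ] ℚ) (halt : ∀ v, B v v = 0)
    (δ : Module.Basis (Fin (2 * g)) ℚ V)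
    {F : Type*} [CommRing F] [Algebra ℝ F]
    (x : Fin (2 * g) → F) (N : Fin (2 * g) → (F →ₗ[ℝ] F))
    (hconst : ∀ (i : Fin (2 * g)) (r : ℝ), N i (algebraMap ℝ F r) = 0)
    (hoff : ∀ i j : Fin (2 * g), i ≠ j → N i (x j) = 0)
    (m : ℕ) (c : Fin (2 * g) → ℤ)
    (heq : ∀ i : Fin (2 * g),
      algebraMap ℝ F (c i) =
        N i (x i) + algebraMap ℝ F ((-1 : ℝ) ^ m) *
          ∑ j, algebraMap ℝ F ((B (δ j) (δ i) : ℚ) : ℝ) * x j)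
    (hchain : ∀ k : Fin (2 * g), 1 ≤ (k : ℕ) →
      ∃ ℓ : Fin (2 * g), (ℓ : ℕ) < (k : ℕ) ∧ B (δ ℓ) (δ k) ≠ 0)
    (lam : Fin (2 * g) → ℚ) (lam0 : ℚ) (hlam : lam ≠ 0)
    (hrel : ∑ j, algebraMap ℝ F ((lam j : ℝ)) * x j = algebraMap ℝ F ((lam0 : ℝ))) :
    ∀ i : Fin (2 * g), N i (x i) = 0 := by
  intro i
  obtain ⟨i₀, hi₀⟩ := Function.ne_iff.mp hlam
  have start : N i₀ (x i₀) = 0 :=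
    apply_self_eq_zero_of_sum_eq_algebraMap hconst hoff hrel (by exact_mod_cast hi₀)
  have hsign : ((-1 : ℝ) ^ m) ≠ 0 := pow_ne_zero m (by norm_num)
  have spread : ∀ a b, N a (x a) = 0 → B (δ b) (δ a) ≠ 0 → N b (x b) = 0 := fun a b ha hba =>
    apply_self_eq_zero_of_apply_self_eq_zero (A := fun j i => ((B (δ j) (δ i) : ℚ) : ℝ))
      hconst hoff hsign (heq a) ha (by exact_mod_cast hba)
  have propagate : ∀ a b, B (δ a) (δ b) ≠ 0 → (N a (x a) = 0 ↔ N b (x b) = 0) :=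
    fun a b hab => ⟨fun ha => spread a b ha ((LinearMap.IsAlt.eq_iff halt).not.mp hab),
      fun hb => spread b a hb hab⟩
  exact ((Fin.eqvGen_of_forall_exists_lt hchain i₀ i).iff_of_forall_rel propagate).mp start

/-- Core of the proof of Theorem 3.1: with `V` a finite-dimensional `ℚ`-vector
space with nondegenerate alternating form and basis `δ`, real-valued
quantities `x j` (elements of an `ℝ`-algebra `F` of functions) and monodromy
increments `N i` (`ℝ`-linear, killing constants and `x j` for `j ≠ i`)
satisfying `c i = N i (x i) + (-1)^m ∑ j (δ j, δ i) x j` with `c i ∈ ℤ`, and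
with the chain condition on the pairings, any nontrivial rational relation
`∑ λ j x j = λ₀` forces `N i (x i) = 0` for all `i`. -/
theorem stmt11 (g : ℕ) {V : Type*} [AddCommGroup V] [Module ℚ V]
    [FiniteDimensional ℚ V]
    (B : V →ₗ[ℚ] V →ₗ[ℚ] ℚ) (halt : ∀ v, B v v = 0) (hnd : B.Nondegenerate)
    (δ : Module.Basis (Fin (2 * g)) ℚ V)
    {F : Type*} [CommRing F] [Algebra ℝ F]
    (x : Fin (2 * g) → F) (N : Fin (2 * g) → (F →ₗ[ℝ] F))
    (hconst : ∀ (i : Fin (2 * g)) (r : ℝ), N i (algebraMap ℝ F r) = 0)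
    (hoff : ∀ i j : Fin (2 * g), i ≠ j → N i (x j) = 0)
    (m : ℕ) (c : Fin (2 * g) → ℤ)
    (heq : ∀ i : Fin (2 * g),
      algebraMap ℝ F (c i) =
        N i (x i) + algebraMap ℝ F ((-1 : ℝ) ^ m) *
          ∑ j, algebraMap ℝ F ((B (δ j) (δ i) : ℚ) : ℝ) * x j)
    (hchain : ∀ k : Fin (2 * g), 1 ≤ (k : ℕ) →
      ∃ ℓ : Fin (2 * g), (ℓ : ℕ) < (k : ℕ) ∧ B (δ ℓ) (δ k) ≠ 0)
    (lam : Fin (2 * g) → ℚ) (lam0 : ℚ) (hlam : lam ≠ 0)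
    (hrel : ∑ j, algebraMap ℝ F ((lam j : ℝ)) * x j = algebraMap ℝ F ((lam0 : ℝ))) :
    ∀ i : Fin (2 * g), N i (x i) = 0 :=
  stmt11_general g B halt δ x N hconst hoff m c heq hchain lam lam0 hlam hrel
end

section
/- Let $p = (x_1, \dots, x_n) \in \mathbb{R}^n$ and suppose the closure of $\{kp \bmod \mathbb{Z}^n : k \in \mathbb{Z}\}$ in $\mathbb{R}^n/\mathbb{Z}^n$ is a proper closed subgroup. Then there exists a nonzero $(\lambda_1,\dots,\lambda_n) \in \mathbb{Z}^n$ with $\sum_{j=1}^n \lambda_j x_j \in \mathbb{Q}$. -/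
open MeasureTheory Set Submodule TopologicalSpace
open scoped ComplexConjugate

noncomputable section KroneckerAux

namespace KroneckerAux

variable {n : ℕ}

/-- Character of the torus attached to an integer vector. -/
def tchar (lam : Fin n → ℤ) : C((Fin n → AddCircle (1:ℝ)), ℂ) :=
  ⟨fun y => ∏ j, fourier (lam j) (y j), by
    apply continuous_finset_prod
    intro j _
    exact (map_continuous (fourier (lam j))).comp (continuous_apply j)⟩

lemma tchar_apply (lam : Fin n → ℤ) (y : Fin n → AddCircle (1:ℝ)) :
    tchar lam y = ∏ j, fourier (lam j) (y j) := rfl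

lemma tchar_zero : (tchar (0 : Fin n → ℤ)) = 1 := by
  ext y
  simp [tchar_apply, fourier_zero]

lemma tchar_add (lam mu : Fin n → ℤ) : tchar (lam + mu) = tchar lam * tchar mu := by
  ext y
  simp only [tchar_apply, ContinuousMap.mul_apply, Pi.add_apply, fourier_add]
  rw [Finset.prod_mul_distrib]

lemma tchar_neg (lam : Fin n → ℤ) : tchar (-lam) = star (tchar lam) := by
  ext y
  simp only [tchar_apply, ContinuousMap.star_apply, Pi.neg_apply, fourier_neg, RCLike.star_def]
  rw [← map_prod]

lemma tchar_apply_add (lam : Fin n → ℤ) (y z : Fin n → AddCircle (1:ℝ)) :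
    tchar lam (y + z) = tchar lam y * tchar lam z := by
  simp only [tchar_apply, Pi.add_apply]
  rw [← Finset.prod_mul_distrib]
  refine Finset.prod_congr rfl fun j _ => ?_
  rw [fourier_apply, fourier_apply, fourier_apply, smul_add, AddCircle.toCircle_add]
  push_cast
  ring

lemma tchar_real (lam : Fin n → ℤ) (x : Fin n → ℝ) :
    tchar lam (fun i => ((x i : AddCircle (1:ℝ)))) =
      Complex.exp (2 * Real.pi * Complex.I * (∑ j, (lam j : ℝ) * x j)) := by
  rw [tchar_apply]
  have : ∀ j : Fin n, fourier (lam j) ((x j : AddCircle (1:ℝ))) =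
      Complex.exp (2 * Real.pi * Complex.I * ((lam j : ℝ) * x j)) := by
    intro j
    rw [fourier_coe_apply]
    push_cast
    ring_nf
  simp_rw [this, ← Complex.exp_sum]
  congr 1
  rw [← Finset.mul_sum]
  push_cast
  ring

lemma tchar_exists_ne_one {lam : Fin n → ℤ} (hlam : lam ≠ 0) :
    ∃ a : Fin n → AddCircle (1:ℝ), tchar lam a ≠ 1 := by
  obtain ⟨j, hj⟩ : ∃ j, lam j ≠ 0 := by
    by_contra hc
    push_neg at hc
    exact hlam (funext hc)
  refine ⟨fun i => if i = j then ((1 / (2 * (lam j : ℝ)) : ℝ) : AddCircle (1:ℝ)) else 0, ?_⟩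
  have key : tchar lam (fun i => if i = j then ((1 / (2 * (lam j : ℝ)) : ℝ) : AddCircle (1:ℝ)) else 0)
      = -1 := by
    rw [tchar_apply]
    rw [Finset.prod_eq_single j]
    · rw [if_pos rfl, fourier_coe_apply]
      have hm : (lam j : ℂ) ≠ 0 := Int.cast_ne_zero.mpr hj
      have : 2 * (Real.pi : ℂ) * Complex.I * (lam j) * ((1 / (2 * (lam j : ℝ)) : ℝ)) / ((1:ℝ):ℂ)
          = Real.pi * Complex.I := by
        push_cast
        field_simp
      rw [this, Complex.exp_pi_mul_I]
    · intro i _ hij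
      simp only [if_neg hij]
      exact fourier_eval_zero (lam i)
    · intro hjj
      exact absurd (Finset.mem_univ j) hjj
  rw [key]
  intro hc
  norm_num at hc

/-- The star subalgebra generated by torus characters. -/
def tAlg (n : ℕ) : StarSubalgebra ℂ C((Fin n → AddCircle (1:ℝ)), ℂ) where
  toSubalgebra := Algebra.adjoin ℂ (range (tchar (n := n)))
  star_mem' := by
    show Algebra.adjoin ℂ (range (tchar (n := n))) ≤
      star (Algebra.adjoin ℂ (range (tchar (n := n))))
    refine Algebra.adjoin_le ?_
    rintro - ⟨lam, rfl⟩
    exact Algebra.subset_adjoin ⟨-lam, tchar_neg lam⟩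

theorem tAlg_coe (n : ℕ) :
    Subalgebra.toSubmodule (tAlg n).toSubalgebra = span ℂ (range (tchar (n := n))) := by
  apply Algebra.adjoin_eq_span_of_subset
  refine Subset.trans ?_ Submodule.subset_span
  intro f hf
  refine Submonoid.closure_induction (fun _ => id) ⟨0, tchar_zero⟩ ?_ hf
  rintro - - - - ⟨a, rfl⟩ ⟨b, rfl⟩
  exact ⟨a + b, tchar_add a b⟩

theorem tAlg_separatesPoints (n : ℕ) : (tAlg n).SeparatesPoints := by
  intro y z hyz
  obtain ⟨j, hj⟩ : ∃ j, y j ≠ z j := by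
    by_contra hc
    push_neg at hc
    exact hyz (funext hc)
  refine ⟨_, ⟨tchar (Pi.single j 1), Algebra.subset_adjoin ⟨Pi.single j 1, rfl⟩, rfl⟩, ?_⟩
  have hval : ∀ w : Fin n → AddCircle (1:ℝ),
      tchar (Pi.single j 1) w = AddCircle.toCircle (w j) := by
    intro w
    rw [tchar_apply, Finset.prod_eq_single j]
    · rw [Pi.single_eq_same, fourier_one]
    · intro i _ hij
      rw [Pi.single_eq_of_ne hij, fourier_zero]
    · intro hjj
      exact absurd (Finset.mem_univ j) hjj
  dsimp only
  rw [hval, hval]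
  intro hc
  rw [Circle.coe_inj] at hc
  exact hj (AddCircle.injective_toCircle one_ne_zero hc)

theorem tAlg_closure_eq_top (n : ℕ) : (tAlg n).topologicalClosure = ⊤ :=
  ContinuousMap.starSubalgebra_topologicalClosure_eq_top_of_separatesPoints (tAlg n)
    (tAlg_separatesPoints n)

theorem span_tchar_dense (n : ℕ) (f : C((Fin n → AddCircle (1:ℝ)), ℂ)) {ε : ℝ} (hε : 0 < ε) :
    ∃ g ∈ span ℂ (range (tchar (n := n))), dist f g < ε := by
  have h1 : f ∈ (span ℂ (range (tchar (n := n)))).topologicalClosure := by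
    rw [← tAlg_coe]
    have := tAlg_closure_eq_top n
    have hf : f ∈ ((tAlg n).topologicalClosure : Set _) := by
      rw [this]; trivial
    exact hf
  have h2 : f ∈ closure ((span ℂ (range (tchar (n := n)))) : Set _) := by
    rw [← Submodule.topologicalClosure_coe]; exact h1
  rw [Metric.mem_closure_iff] at h2
  obtain ⟨g, hg, hd⟩ := h2 ε hε
  exact ⟨g, hg, hd⟩

instance : IsProbabilityMeasure (volume : Measure (AddCircle (1:ℝ))) :=
  ⟨by rw [AddCircle.measure_univ]; norm_num⟩

set_option maxHeartbeats 1000000 in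
set_option synthInstance.maxHeartbeats 1000000 in
theorem main (n : ℕ) (p : Fin n → AddCircle (1:ℝ))
    (hch : ∀ lam : Fin n → ℤ, lam ≠ 0 → tchar lam p ≠ 1) :
    closure (Set.range fun k : ℤ => k • p) = Set.univ := by
  by_contra hne
  set H : AddSubgroup (Fin n → AddCircle (1:ℝ)) := (AddSubgroup.zmultiples p).topologicalClosure
    with hHdef
  have hHS : (H : Set (Fin n → AddCircle (1:ℝ))) = closure (Set.range fun k : ℤ => k • p) := by
    have : ((AddSubgroup.zmultiples p : AddSubgroup _) : Set _)
        = Set.range fun k : ℤ => k • p := by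
      ext y
      simp [AddSubgroup.mem_zmultiples_iff, eq_comm]
    rw [hHdef, AddSubgroup.topologicalClosure_coe, this]
  obtain ⟨y₀, hy₀⟩ : ∃ y₀, y₀ ∉ H := by
    by_contra hc
    push_neg at hc
    apply hne
    rw [← hHS]
    exact Set.eq_univ_of_forall hc
  -- set up measures
  haveI hGcompact : CompactSpace ↥H :=
    isCompact_iff_compactSpace.mp ((AddSubgroup.zmultiples p).isClosed_topologicalClosure.isCompact)
  letI : MeasurableSpace ↥H := borel _
  haveI : BorelSpace ↥H := ⟨rfl⟩
  let μ : Measure ↥H := Measure.addHaarMeasure ⊤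
  haveI hμprob : IsProbabilityMeasure μ := ⟨by
    rw [← TopologicalSpace.PositiveCompacts.coe_top (α := ↥H)]
    exact Measure.addHaarMeasure_self⟩
  haveI : μ.IsAddLeftInvariant := inferInstance
  let ν : Measure (Fin n → AddCircle (1:ℝ)) := Measure.pi fun _ => volume
  haveI hνprob : IsProbabilityMeasure ν := by unfold ν; infer_instance
  haveI : ν.IsAddLeftInvariant := by unfold ν; infer_instance
  haveI : ν.IsOpenPosMeasure := by unfold ν; infer_instance
  -- integrability
  have hIntG : ∀ f : C((Fin n → AddCircle (1:ℝ)), ℂ),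
      Integrable (fun g : ↥H => f (g : Fin n → AddCircle (1:ℝ))) μ := fun f =>
    (f.continuous.comp continuous_subtype_val).integrable_of_hasCompactSupport
      (HasCompactSupport.of_compactSpace _)
  have hIntT : ∀ f : C((Fin n → AddCircle (1:ℝ)), ℂ), Integrable (fun y => f y) ν := fun f =>
    f.continuous.integrable_of_hasCompactSupport (HasCompactSupport.of_compactSpace _)
  -- Step A : integrals of characters agree
  have hchar : ∀ lam : Fin n → ℤ,
      (∫ g : ↥H, tchar lam (g : Fin n → AddCircle (1:ℝ)) ∂μ) = ∫ y, tchar lam y ∂ν := by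
    intro lam
    rcases eq_or_ne lam 0 with rfl | hlam
    · simp [tchar_zero]
    · have hp : p ∈ H := (AddSubgroup.le_topologicalClosure _) (AddSubgroup.mem_zmultiples p)
      have hL : (∫ g : ↥H, tchar lam (g : Fin n → AddCircle (1:ℝ)) ∂μ) = 0 := by
        have hinv := integral_add_left_eq_self (μ := μ)
          (fun g : ↥H => tchar lam (g : Fin n → AddCircle (1:ℝ))) ⟨p, hp⟩
        have heq : ∀ g : ↥H,
            tchar lam (((⟨p, hp⟩ : ↥H) + g : ↥H) : Fin n → AddCircle (1:ℝ))
              = tchar lam p * tchar lam (g : Fin n → AddCircle (1:ℝ)) := by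
          intro g
          rw [AddSubgroup.coe_add, tchar_apply_add]
        rw [funext heq] at hinv
        rw [integral_const_mul] at hinv
        have hfac : (tchar lam p - 1) * (∫ g : ↥H, tchar lam (g : Fin n → AddCircle (1:ℝ)) ∂μ)
            = 0 := by
          rw [sub_mul, one_mul, hinv, sub_self]
        rcases mul_eq_zero.mp hfac with hc | hc
        · exact absurd (by linear_combination hc) (hch lam hlam)
        · exact hc
      have hR : (∫ y, tchar lam y ∂ν) = 0 := by
        obtain ⟨a, ha⟩ := tchar_exists_ne_one hlam
        have hinv := integral_add_left_eq_self (μ := ν) (fun y => tchar lam y) a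
        have heq : ∀ y, tchar lam (a + y) = tchar lam a * tchar lam y := fun y =>
          tchar_apply_add lam a y
        rw [funext heq] at hinv
        rw [integral_const_mul] at hinv
        have hfac : (tchar lam a - 1) * (∫ y, tchar lam y ∂ν) = 0 := by
          rw [sub_mul, one_mul, hinv, sub_self]
        rcases mul_eq_zero.mp hfac with hc | hc
        · exact absurd (by linear_combination hc) ha
        · exact hc
      rw [hL, hR]
  -- Step B : integrals agree on the span
  have hspan : ∀ f ∈ span ℂ (range (tchar (n := n))),
      (∫ g : ↥H, f (g : Fin n → AddCircle (1:ℝ)) ∂μ) = ∫ y, f y ∂ν := by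
    intro f hf
    induction hf using Submodule.span_induction with
    | mem u hu => obtain ⟨lam, rfl⟩ := hu; exact hchar lam
    | zero => simp
    | add u v hu hv hu' hv' =>
      have h1 : ∀ y, (u + v) y = u y + v y := fun y => rfl
      simp_rw [h1]
      rw [integral_add (hIntG u) (hIntG v), integral_add (hIntT u) (hIntT v), hu', hv']
    | smul c u hu hu' =>
      have h1 : ∀ y, (c • u) y = c • u y := fun y => rfl
      simp_rw [h1]
      rw [integral_smul, integral_smul, hu']
  -- Step C : integrals agree for all continuous functions
  have hall : ∀ f : C((Fin n → AddCircle (1:ℝ)), ℂ),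
      (∫ g : ↥H, f (g : Fin n → AddCircle (1:ℝ)) ∂μ) = ∫ y, f y ∂ν := by
    intro f
    have key : ∀ ε : ℝ, 0 < ε →
        ‖(∫ g : ↥H, f (g : Fin n → AddCircle (1:ℝ)) ∂μ) - ∫ y, f y ∂ν‖ ≤ 2 * ε := by
      intro ε hε
      obtain ⟨g, hg, hdist⟩ := span_tchar_dense n f hε
      have hbound : ∀ y, ‖f y - g y‖ ≤ ε := by
        intro y
        calc ‖f y - g y‖ = dist (f y) (g y) := (dist_eq_norm _ _).symm
        _ ≤ dist f g := ContinuousMap.dist_apply_le_dist y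
        _ ≤ ε := le_of_lt hdist
      have e1 : ‖∫ gg : ↥H, (f (gg : Fin n → AddCircle (1:ℝ)) - g (gg : Fin n → AddCircle (1:ℝ))) ∂μ‖
          ≤ ε := by
        refine le_trans (norm_integral_le_of_norm_le_const (C := ε) ?_) ?_
        · exact Filter.Eventually.of_forall fun gg => hbound _
        · rw [probReal_univ]; simp
      have e2 : ‖∫ y, (f y - g y) ∂ν‖ ≤ ε := by
        refine le_trans (norm_integral_le_of_norm_le_const (C := ε) ?_) ?_
        · exact Filter.Eventually.of_forall fun y => hbound _
        · rw [probReal_univ]; simp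
      have hsub1 : (∫ gg : ↥H, (f (gg : Fin n → AddCircle (1:ℝ)) - g (gg : Fin n → AddCircle (1:ℝ))) ∂μ)
          = (∫ gg : ↥H, f (gg : Fin n → AddCircle (1:ℝ)) ∂μ)
            - ∫ gg : ↥H, g (gg : Fin n → AddCircle (1:ℝ)) ∂μ :=
        integral_sub (hIntG f) (hIntG g)
      have hsub2 : (∫ y, (f y - g y) ∂ν) = (∫ y, f y ∂ν) - ∫ y, g y ∂ν :=
        integral_sub (hIntT f) (hIntT g)
      have hmid := hspan g hg
      calc ‖(∫ gg : ↥H, f (gg : Fin n → AddCircle (1:ℝ)) ∂μ) - ∫ y, f y ∂ν‖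
          = ‖((∫ gg : ↥H, f (gg : Fin n → AddCircle (1:ℝ)) ∂μ)
              - ∫ gg : ↥H, g (gg : Fin n → AddCircle (1:ℝ)) ∂μ)
            - ((∫ y, f y ∂ν) - ∫ y, g y ∂ν)‖ := by rw [hmid]; ring_nf
        _ ≤ ‖(∫ gg : ↥H, f (gg : Fin n → AddCircle (1:ℝ)) ∂μ)
              - ∫ gg : ↥H, g (gg : Fin n → AddCircle (1:ℝ)) ∂μ‖
            + ‖(∫ y, f y ∂ν) - ∫ y, g y ∂ν‖ := norm_sub_le _ _
        _ ≤ ε + ε := by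
            rw [← hsub1, ← hsub2]
            exact add_le_add e1 e2
        _ = 2 * ε := by ring
    have : ‖(∫ g : ↥H, f (g : Fin n → AddCircle (1:ℝ)) ∂μ) - ∫ y, f y ∂ν‖ ≤ 0 := by
      refine le_of_forall_pos_le_add ?_
      intro ε hε
      calc ‖(∫ g : ↥H, f (g : Fin n → AddCircle (1:ℝ)) ∂μ) - ∫ y, f y ∂ν‖
          ≤ 2 * (ε / 2) := key (ε / 2) (by linarith)
        _ = ε := by ring
        _ ≤ 0 + ε := by linarith
    have h0 := le_antisymm this (norm_nonneg _)
    rw [norm_eq_zero, sub_eq_zero] at h0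
    exact h0
  -- Step D : Urysohn contradiction
  obtain ⟨f, hf0, hf1, hficc⟩ := exists_continuous_zero_one_of_isCompact
    ((AddSubgroup.zmultiples p).isClosed_topologicalClosure.isCompact) (isClosed_singleton (x := y₀))
    (by simp [Set.disjoint_singleton_right]; exact hy₀)
  let F : C((Fin n → AddCircle (1:ℝ)), ℂ) :=
    ⟨fun y => ((f y : ℝ) : ℂ), Complex.continuous_ofReal.comp f.continuous⟩
  have hFG : (∫ g : ↥H, F (g : Fin n → AddCircle (1:ℝ)) ∂μ) = 0 := by
    have : ∀ g : ↥H, F (g : Fin n → AddCircle (1:ℝ)) = 0 := by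
      intro g
      have := hf0 g.2
      simp only [F, ContinuousMap.coe_mk]
      rw [show f (g : Fin n → AddCircle (1:ℝ)) = 0 from this]
      norm_num
    simp_rw [this]
    exact integral_zero _ _
  have hFT : (∫ y, F y ∂ν) = 0 := by rw [← hall F, hFG]
  have hfT : (∫ y, f y ∂ν) = 0 := by
    have : (∫ y, F y ∂ν) = ((∫ y, f y ∂ν : ℝ) : ℂ) := integral_ofReal
    rw [this] at hFT
    exact_mod_cast hFT
  have hfint : Integrable (fun y => f y) ν :=
    f.continuous.integrable_of_hasCompactSupport (HasCompactSupport.of_compactSpace _)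
  have hae : ⇑f =ᵐ[ν] 0 := by
    rw [← integral_eq_zero_iff_of_nonneg (fun y => (hficc y).1) hfint]
    exact hfT
  have hfeq : ⇑f = (0 : (Fin n → AddCircle (1:ℝ)) → ℝ) :=
    MeasureTheory.Measure.eq_of_ae_eq hae f.continuous continuous_const
  have : f y₀ = 1 := hf1 rfl
  have : (0 : ℝ) = 1 := by
    rw [← this]
    exact (congrFun hfeq y₀).symm
  norm_num at this

end KroneckerAux

/-- If the closure of the cyclic subgroup generated by the image of
`x = (x 1, ..., x n)` in `ℝⁿ/ℤⁿ` is a proper subset, then there is a nonzero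
integer vector `λ` with `∑ λ j * x j ∈ ℚ`. -/
theorem stmt14 (n : ℕ) (x : Fin n → ℝ)
    (h : closure (Set.range fun k : ℤ => k • (fun i => (x i : AddCircle (1:ℝ))))
      ≠ Set.univ) :
    ∃ lam : Fin n → ℤ, lam ≠ 0 ∧ ∃ q : ℚ, ∑ j, (lam j : ℝ) * x j = (q : ℝ) := by
  by_contra hcon
  push_neg at hcon
  apply h
  apply KroneckerAux.main
  intro lam hlam hone
  have hval := KroneckerAux.tchar_real lam x
  rw [hone] at hval
  have hexp : Complex.exp (2 * Real.pi * Complex.I * ((∑ j, (lam j : ℝ) * x j : ℝ) : ℂ)) = 1 := by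
    rw [← hval]
  rw [Complex.exp_eq_one_iff] at hexp
  obtain ⟨k, hk⟩ := hexp
  have h2 : (2 * (Real.pi : ℂ) * Complex.I) ≠ 0 := by
    simp [Real.pi_ne_zero, Complex.I_ne_zero]
  have hs : ((∑ j, (lam j : ℝ) * x j : ℝ) : ℂ) = (k : ℂ) := by
    apply mul_left_cancel₀ h2
    rw [hk]
    ring
  have hreal : ∑ j, (lam j : ℝ) * x j = (k : ℝ) := by exact_mod_cast hs
  exact hcon lam hlam (k : ℚ) (by rw [hreal]; norm_num)

end KroneckerAux
end
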